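/- arXiv:1001.2786 — 4 statements merged into one kernel-verified Lean document; each statement's English description precedes it below -/
import Mathlib

section
/- Let g11, g12, g21, g22, p1, p2 be nonnegative reals with g12 ≥ g22 (strong interference at receiver 1). Then for all α1, α2 ∈ [0,1]: C((g11·p1 + (1−α2)·g12·p2)/(1 + α2·g12·p2)) + C(α2·g22·p2/(1 + α1·g21·p1)) ≤ C(g11·p1 + g12·p2). In particular, the integrand of the Han–Kobayashi sum-rate bound S2 is maximized by sending only common messages (α1 = α2 = 0) in every strong sub-channel. -/
/-! Writing `x = α2 g12 p2` for the private power seen at receiver 1, the first rate is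
`C((T - x)/(1 + x))` with `T = g11 p1 + g12 p2`, and `C((T - x)/(1 + x)) + C x = C T` is the
chain rule for `C`. Under strong interference the second rate is at most `C(α2 g22 p2) ≤ C x`. -/

/-- `C(x) = log₂(1+x)`. -/
noncomputable def C (x : ℝ) : ℝ := Real.logb 2 (1 + x)

theorem C_le_C {x y : ℝ} (hx : -1 < x) (hxy : x ≤ y) : C x ≤ C y :=
  Real.logb_le_logb_of_le one_lt_two (by linarith) (by linarith)

theorem C_div_add_C {s t : ℝ} (hs : 1 + s ≠ 0) (ht : 1 + t ≠ 0) :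
    C ((t - s) / (1 + s)) + C s = C t := by
  have h : 1 + (t - s) / (1 + s) = (1 + t) / (1 + s) := by
    field_simp
    ring
  rw [C, C, C, h, Real.logb_div ht hs, sub_add_cancel]

/-- Under strong interference at receiver 1 (`g12 ≥ g22`), the integrand of the
Han–Kobayashi sum-rate bound `S2` is at most its value at `α1 = α2 = 0` (only common messages),
namely `C(g11 p1 + g12 p2)`. -/
theorem stmt1 (g11 g12 g21 g22 p1 p2 α1 α2 : ℝ)
    (hg11 : 0 ≤ g11) (hg12 : 0 ≤ g12) (hg21 : 0 ≤ g21) (hg22 : 0 ≤ g22)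
    (hp1 : 0 ≤ p1) (hp2 : 0 ≤ p2)
    (hstrong : g22 ≤ g12)
    (hα1 : α1 ∈ Set.Icc (0 : ℝ) 1) (hα2 : α2 ∈ Set.Icc (0 : ℝ) 1) :
    C ((g11 * p1 + (1 - α2) * g12 * p2) / (1 + α2 * g12 * p2))
        + C (α2 * g22 * p2 / (1 + α1 * g21 * p1))
      ≤ C (g11 * p1 + g12 * p2) := by
  obtain ⟨hα1, -⟩ := hα1
  obtain ⟨hα2, -⟩ := hα2
  have hcross : α2 * g22 * p2 ≤ α2 * g12 * p2 := by gcongr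
  have hinterf : α2 * g22 * p2 / (1 + α1 * g21 * p1) ≤ α2 * g22 * p2 :=
    div_le_self (by positivity) (le_add_of_nonneg_right (by positivity))
  have hsplit : g11 * p1 + (1 - α2) * g12 * p2 = (g11 * p1 + g12 * p2) - α2 * g12 * p2 := by
    ring
  calc C ((g11 * p1 + (1 - α2) * g12 * p2) / (1 + α2 * g12 * p2))
        + C (α2 * g22 * p2 / (1 + α1 * g21 * p1))
      ≤ C ((g11 * p1 + g12 * p2 - α2 * g12 * p2) / (1 + α2 * g12 * p2)) + C (α2 * g12 * p2) := by
        rw [hsplit]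
        gcongr
        exact C_le_C (neg_one_lt_zero.trans_le (by positivity)) (hinterf.trans hcross)
    _ = C (g11 * p1 + g12 * p2) := C_div_add_C (by positivity) (by positivity)
end

section
/- If S1(0,p) < S2(0,p) and S1(0,p) < S3(0,p), then S1(0,p) < S_m(0,p) for every m ∈ {4, 5, 6}; consequently min over j ∈ {1,...,6} of S_j(0,p) = S1(0,p). That is, the ergodic-very-strong condition against the two multiple-access sum-rate bounds automatically implies the remaining Han–Kobayashi sum-rate bounds are not active. -/
/-!
Since `1 + a + b ≤ (1 + a)(1 + b)` for `a, b ≥ 0`, the capacity function `C` is subadditive on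
`[0, ∞)`, so each multiple-access bound is dominated by a sum of single-link terms:
`S2 ≤ E[C(g11 p1)] + E[C(g12 p2)]` and `S3 ≤ E[C(g21 p1)] + E[C(g22 p2)]`. Together with
`S1 < S2` and `S1 < S3` this forces `E[C(g22 p2)] < E[C(g12 p2)]` and
`E[C(g11 p1)] < E[C(g21 p1)]`, i.e. the interference links are stronger than the direct ones,
and each of `S4`, `S5`, `S6` exceeds `S1` by a linear combination of these two gaps.
-/

open MeasureTheory

lemma C_add_le {a b : ℝ} (ha : 0 ≤ a) (hb : 0 ≤ b) : C (a + b) ≤ C a + C b := by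
  unfold C
  rw [← Real.logb_mul (by positivity) (by positivity)]
  exact Real.logb_le_logb_of_le one_lt_two (by positivity) (by nlinarith)

lemma integral_C_add_le {Ω : Type*} [MeasurableSpace Ω] {μ : Measure Ω} {f g : Ω → ℝ}
    (hf : 0 ≤ᵐ[μ] f) (hg : 0 ≤ᵐ[μ] g)
    (hCfg : Integrable (fun ω => C (f ω + g ω)) μ)
    (hCf : Integrable (fun ω => C (f ω)) μ) (hCg : Integrable (fun ω => C (g ω)) μ) :
    ∫ ω, C (f ω + g ω) ∂μ ≤ (∫ ω, C (f ω) ∂μ) + ∫ ω, C (g ω) ∂μ := by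
  rw [← integral_add hCf hCg]
  refine integral_mono_ae hCfg (hCf.add hCg) ?_
  filter_upwards [hf, hg] with ω hfω hgω using C_add_le hfω hgω

theorem stmt4_general {Ω : Type*} [MeasurableSpace Ω] (μ : Measure Ω)
    (g11 g12 g21 g22 p1 p2 : Ω → ℝ)
    (hg11n : ∀ ω, 0 ≤ g11 ω) (hg12n : ∀ ω, 0 ≤ g12 ω)
    (hg21n : ∀ ω, 0 ≤ g21 ω) (hg22n : ∀ ω, 0 ≤ g22 ω)
    (hp1n : ∀ ω, 0 ≤ p1 ω) (hp2n : ∀ ω, 0 ≤ p2 ω)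
    (hI1 : Integrable (fun ω => C (g11 ω * p1 ω)) μ)
    (hI2 : Integrable (fun ω => C (g22 ω * p2 ω)) μ)
    (hI3 : Integrable (fun ω => C (g11 ω * p1 ω + g12 ω * p2 ω)) μ)
    (hI4 : Integrable (fun ω => C (g21 ω * p1 ω + g22 ω * p2 ω)) μ)
    (hI5 : Integrable (fun ω => C (g12 ω * p2 ω)) μ)
    (hI6 : Integrable (fun ω => C (g21 ω * p1 ω)) μ)
    (S1 S2 S3 S4 S5 S6 : ℝ)
    (hS1 : S1 = (∫ ω, C (g11 ω * p1 ω) ∂μ) + ∫ ω, C (g22 ω * p2 ω) ∂μ)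
    (hS2 : S2 = ∫ ω, C (g11 ω * p1 ω + g12 ω * p2 ω) ∂μ)
    (hS3 : S3 = ∫ ω, C (g21 ω * p1 ω + g22 ω * p2 ω) ∂μ)
    (hS4 : S4 = (∫ ω, C (g12 ω * p2 ω) ∂μ) + ∫ ω, C (g21 ω * p1 ω) ∂μ)
    (hS5 : S5 = ((∫ ω, C (g11 ω * p1 ω + g12 ω * p2 ω) ∂μ)
        + (∫ ω, C (g21 ω * p1 ω) ∂μ) + ∫ ω, C (g22 ω * p2 ω) ∂μ) / 2)
    (hS6 : S6 = ((∫ ω, C (g21 ω * p1 ω + g22 ω * p2 ω) ∂μ)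
        + (∫ ω, C (g12 ω * p2 ω) ∂μ) + ∫ ω, C (g11 ω * p1 ω) ∂μ) / 2)
    (hEVS1 : S1 < S2) (hEVS2 : S1 < S3) :
    S1 < S4 ∧ S1 < S5 ∧ S1 < S6 ∧
      min S1 (min S2 (min S3 (min S4 (min S5 S6)))) = S1 := by
  have hnonneg {g p : Ω → ℝ} (hg : ∀ ω, 0 ≤ g ω) (hp : ∀ ω, 0 ≤ p ω) :
      0 ≤ᵐ[μ] fun ω => g ω * p ω :=
    .of_forall fun ω => mul_nonneg (hg ω) (hp ω)
  have hMAC1 : S2 ≤ (∫ ω, C (g11 ω * p1 ω) ∂μ) + ∫ ω, C (g12 ω * p2 ω) ∂μ :=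
    hS2 ▸ integral_C_add_le (hnonneg hg11n hp1n) (hnonneg hg12n hp2n) hI3 hI1 hI5
  have hMAC2 : S3 ≤ (∫ ω, C (g21 ω * p1 ω) ∂μ) + ∫ ω, C (g22 ω * p2 ω) ∂μ :=
    hS3 ▸ integral_C_add_le (hnonneg hg21n hp1n) (hnonneg hg22n hp2n) hI4 hI6 hI2
  have h4 : S1 < S4 := by linarith
  have h5 : S1 < S5 := by linarith
  have h6 : S1 < S6 := by linarith
  exact ⟨h4, h5, h6, min_eq_left <| le_min hEVS1.le <| le_min hEVS2.le <|
    le_min h4.le <| le_min h5.le h6.le⟩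

/-- If `S1(0,p) < S2(0,p)` and `S1(0,p) < S3(0,p)` (the ergodic-very-strong
condition against the two multiple-access sum-rate bounds), then `S1(0,p) < S_m(0,p)` for
every `m ∈ {4,5,6}`; consequently `min_{j∈{1,…,6}} S_j(0,p) = S1(0,p)`. -/
theorem stmt4 {Ω : Type*} [MeasurableSpace Ω] (μ : Measure Ω) [IsProbabilityMeasure μ]
    (g11 g12 g21 g22 p1 p2 : Ω → ℝ)
    (hg11 : Measurable g11) (hg12 : Measurable g12)
    (hg21 : Measurable g21) (hg22 : Measurable g22)
    (hp1 : Measurable p1) (hp2 : Measurable p2)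
    (hg11n : ∀ ω, 0 ≤ g11 ω) (hg12n : ∀ ω, 0 ≤ g12 ω)
    (hg21n : ∀ ω, 0 ≤ g21 ω) (hg22n : ∀ ω, 0 ≤ g22 ω)
    (hp1n : ∀ ω, 0 ≤ p1 ω) (hp2n : ∀ ω, 0 ≤ p2 ω)
    (hI1 : Integrable (fun ω => C (g11 ω * p1 ω)) μ)
    (hI2 : Integrable (fun ω => C (g22 ω * p2 ω)) μ)
    (hI3 : Integrable (fun ω => C (g11 ω * p1 ω + g12 ω * p2 ω)) μ)
    (hI4 : Integrable (fun ω => C (g21 ω * p1 ω + g22 ω * p2 ω)) μ)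
    (hI5 : Integrable (fun ω => C (g12 ω * p2 ω)) μ)
    (hI6 : Integrable (fun ω => C (g21 ω * p1 ω)) μ)
    (S1 S2 S3 S4 S5 S6 : ℝ)
    (hS1 : S1 = (∫ ω, C (g11 ω * p1 ω) ∂μ) + ∫ ω, C (g22 ω * p2 ω) ∂μ)
    (hS2 : S2 = ∫ ω, C (g11 ω * p1 ω + g12 ω * p2 ω) ∂μ)
    (hS3 : S3 = ∫ ω, C (g21 ω * p1 ω + g22 ω * p2 ω) ∂μ)
    (hS4 : S4 = (∫ ω, C (g12 ω * p2 ω) ∂μ) + ∫ ω, C (g21 ω * p1 ω) ∂μ)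
    (hS5 : S5 = ((∫ ω, C (g11 ω * p1 ω + g12 ω * p2 ω) ∂μ)
        + (∫ ω, C (g21 ω * p1 ω) ∂μ) + ∫ ω, C (g22 ω * p2 ω) ∂μ) / 2)
    (hS6 : S6 = ((∫ ω, C (g21 ω * p1 ω + g22 ω * p2 ω) ∂μ)
        + (∫ ω, C (g12 ω * p2 ω) ∂μ) + ∫ ω, C (g11 ω * p1 ω) ∂μ) / 2)
    (hEVS1 : S1 < S2) (hEVS2 : S1 < S3) :
    S1 < S4 ∧ S1 < S5 ∧ S1 < S6 ∧
      min S1 (min S2 (min S3 (min S4 (min S5 S6)))) = S1 :=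
  stmt4_general μ g11 g12 g21 g22 p1 p2 hg11n hg12n hg21n hg22n hp1n hp2n hI1 hI2 hI3 hI4 hI5 hI6 S1
    S2 S3 S4 S5 S6 hS1 hS2 hS3 hS4 hS5 hS6 hEVS1 hEVS2
end

section
/- Let g12, g21, g22, p1, p2 be nonnegative reals with g22 ≥ (1 + g21·p1)·g12. Then for each fixed α1 ∈ [0,1], the function α2 ↦ C(α2·g22·p2/(1 + α1·g21·p1)) − log₂(1 + α2·g12·p2) is nondecreasing on [0,1], hence is maximized at α2 = 1. -/
open Real Set

/-- Cross-multiplying, the claim becomes `(1 + x a)(1 + y b) ≤ (1 + y a)(1 + x b)`, whose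
difference is `(y - x)(a - b) ≥ 0`. -/
theorem monotoneOn_logb_one_add_mul_sub_logb_one_add_mul {c a b : ℝ} (hc : 1 < c)
    (hb : 0 ≤ b) (hab : b ≤ a) :
    MonotoneOn (fun x : ℝ => logb c (1 + x * a) - logb c (1 + x * b)) (Ici 0) := by
  intro x (hx : 0 ≤ x) y (hy : 0 ≤ y) hxy
  have ha : 0 ≤ a := hb.trans hab
  have hxa : 0 < 1 + x * a := by positivity
  have hya : 0 < 1 + y * a := by positivity
  have hxb : 0 < 1 + x * b := by positivity
  have hyb : 0 < 1 + y * b := by positivity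
  simp only [sub_le_sub_iff]
  rw [← logb_mul hxa.ne' hyb.ne', ← logb_mul hya.ne' hxb.ne']
  refine logb_le_logb_of_le hc (by positivity) ?_
  nlinarith [mul_nonneg (sub_nonneg.2 hxy) (sub_nonneg.2 hab)]

theorem stmt8_general (g12 g21 g22 p1 p2 : ℝ)
    (hg12 : 0 ≤ g12) (hg21 : 0 ≤ g21)
    (hp1 : 0 ≤ p1) (hp2 : 0 ≤ p2)
    (hUW : (1 + g21 * p1) * g12 ≤ g22)
    (α1 : ℝ) (hα1 : α1 ∈ Set.Icc (0 : ℝ) 1) :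
    MonotoneOn (fun α2 : ℝ =>
        C (α2 * g22 * p2 / (1 + α1 * g21 * p1)) - Real.logb 2 (1 + α2 * g12 * p2))
      (Set.Icc 0 1)
    ∧ ∀ α2 ∈ Set.Icc (0 : ℝ) 1,
        C (α2 * g22 * p2 / (1 + α1 * g21 * p1)) - Real.logb 2 (1 + α2 * g12 * p2)
          ≤ C (g22 * p2 / (1 + α1 * g21 * p1)) - Real.logb 2 (1 + g12 * p2) := by
  obtain ⟨hα1₀, hα1₁⟩ := hα1
  have hD : 0 < 1 + α1 * g21 * p1 := by positivity
  -- (UW_C1), weakened by `α1 ≤ 1`: the effective direct gain dominates the cross gain.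
  have hab : g12 * p2 ≤ g22 * p2 / (1 + α1 * g21 * p1) := by
    rw [le_div_iff₀ hD]
    have hα1g : α1 * (g21 * p1) ≤ g21 * p1 := mul_le_of_le_one_left (by positivity) hα1₁
    nlinarith [mul_nonneg hg12 hp2]
  have hmono : MonotoneOn (fun α2 : ℝ =>
      C (α2 * g22 * p2 / (1 + α1 * g21 * p1)) - logb 2 (1 + α2 * g12 * p2)) (Icc 0 1) := by
    convert (monotoneOn_logb_one_add_mul_sub_logb_one_add_mul one_lt_two
      (mul_nonneg hg12 hp2) hab).mono Icc_subset_Ici_self using 2 with α2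
    simp only [C, mul_div_assoc, mul_assoc]
  refine ⟨hmono, fun α2 hα2 => ?_⟩
  simpa using hmono hα2 (right_mem_Icc.2 zero_le_one) hα2.2

/-- If `g22 ≥ (1 + g21 p1) g12` (condition (UW_C1)), then for each fixed
`α1 ∈ [0,1]`, the map `α2 ↦ C(α2 g22 p2/(1 + α1 g21 p1)) − log₂(1 + α2 g12 p2)` is
nondecreasing on `[0,1]`, hence maximized at `α2 = 1`. -/
theorem stmt8 (g12 g21 g22 p1 p2 : ℝ)
    (hg12 : 0 ≤ g12) (hg21 : 0 ≤ g21) (hg22 : 0 ≤ g22)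
    (hp1 : 0 ≤ p1) (hp2 : 0 ≤ p2)
    (hUW : (1 + g21 * p1) * g12 ≤ g22)
    (α1 : ℝ) (hα1 : α1 ∈ Set.Icc (0 : ℝ) 1) :
    MonotoneOn (fun α2 : ℝ =>
        C (α2 * g22 * p2 / (1 + α1 * g21 * p1)) - Real.logb 2 (1 + α2 * g12 * p2))
      (Set.Icc 0 1)
    ∧ ∀ α2 ∈ Set.Icc (0 : ℝ) 1,
        C (α2 * g22 * p2 / (1 + α1 * g21 * p1)) - Real.logb 2 (1 + α2 * g12 * p2)
          ≤ C (g22 * p2 / (1 + α1 * g21 * p1)) - Real.logb 2 (1 + g12 * p2) :=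
  stmt8_general g12 g21 g22 p1 p2 hg12 hg21 hp1 hp2 hUW α1 hα1
end

section
/- Let g11, g12, g21, g22, p1, p2 be nonnegative reals with g22 ≥ (1 + g21·p1)·g12 and g11 ≥ (1 + g12·p2)·g21. Then the function f(α1, α2) = log₂(1 + α1·g11·p1 + g12·p2) − log₂(1 + α2·g12·p2) + log₂(1 + α2·g22·p2 + g21·p1) − log₂(1 + α1·g21·p1) is nondecreasing in α1 and nondecreasing in α2 on [0,1]², hence is maximized at (α1, α2) = (1, 1). Moreover f(α1, α2) equals the integrand of the Han–Kobayashi sum-rate bound S4, i.e. f(α1,α2) = C((α1·g11·p1 + (1−α2)·g12·p2)/(1 + α2·g12·p2)) + C((α2·g22·p2 + (1−α1)·g21·p1)/(1 + α1·g21·p1)). -/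
/-- The integrand of the Han–Kobayashi sum-rate bound `S4`, in decomposed form. -/
noncomputable def f (g11 g12 g21 g22 p1 p2 α1 α2 : ℝ) : ℝ :=
  Real.logb 2 (1 + α1 * g11 * p1 + g12 * p2) - Real.logb 2 (1 + α2 * g12 * p2)
    + Real.logb 2 (1 + α2 * g22 * p2 + g21 * p1) - Real.logb 2 (1 + α1 * g21 * p1)

open Real Set

noncomputable def rateGain (A B c a : ℝ) : ℝ :=
  logb 2 (1 + a * A + B) - logb 2 (1 + a * c)

lemma f_eq_rateGain_add (g11 g12 g21 g22 p1 p2 α1 α2 : ℝ) :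
    f g11 g12 g21 g22 p1 p2 α1 α2
      = rateGain (g11 * p1) (g12 * p2) (g21 * p1) α1
        + rateGain (g22 * p2) (g21 * p1) (g12 * p2) α2 := by
  simp only [f, rateGain, mul_assoc]
  ring

lemma rateGain_monotoneOn {A B c : ℝ} (hB : 0 ≤ B) (hc : 0 ≤ c) (h : (1 + B) * c ≤ A) :
    MonotoneOn (rateGain A B c) (Ici 0) := by
  intro a (ha : 0 ≤ a) b (hb : 0 ≤ b) hab
  have hA : 0 ≤ A := le_trans (by positivity) h
  have cross : (1 + a * A + B) * (1 + b * c) ≤ (1 + b * A + B) * (1 + a * c) := by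
    have hdiff : (1 + b * A + B) * (1 + a * c) - (1 + a * A + B) * (1 + b * c)
        = (b - a) * (A - (1 + B) * c) := by ring
    exact sub_nonneg.1 (hdiff ▸ mul_nonneg (sub_nonneg.2 hab) (sub_nonneg.2 h))
  have hlog := logb_le_logb_of_le one_lt_two (by positivity) cross
  rw [logb_mul (by positivity) (by positivity), logb_mul (by positivity) (by positivity)] at hlog
  unfold rateGain
  linarith

lemma C_div_eq_logb_sub {x d n : ℝ} (hd : d ≠ 0) (hn : n ≠ 0) (h : d + x = n) :
    C (x / d) = logb 2 n - logb 2 d := by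
  rw [C, ← logb_div hn hd, ← h, add_div, div_self hd]

/-- Under the uniformly weak conditions `g22 ≥ (1 + g21 p1) g12` (UW_C1) and
`g11 ≥ (1 + g12 p2) g21` (UW_C2), the function `f(α1, α2)` is nondecreasing in each argument
on `[0,1]²`, hence maximized at `(1,1)`; moreover `f` equals the integrand of the
Han–Kobayashi sum-rate bound `S4`. -/
theorem stmt9 (g11 g12 g21 g22 p1 p2 : ℝ)
    (hg11 : 0 ≤ g11) (hg12 : 0 ≤ g12) (hg21 : 0 ≤ g21) (hg22 : 0 ≤ g22)
    (hp1 : 0 ≤ p1) (hp2 : 0 ≤ p2)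
    (hUW1 : (1 + g21 * p1) * g12 ≤ g22)
    (hUW2 : (1 + g12 * p2) * g21 ≤ g11) :
    (∀ α2 ∈ Set.Icc (0 : ℝ) 1,
        MonotoneOn (fun α1 => f g11 g12 g21 g22 p1 p2 α1 α2) (Set.Icc 0 1))
    ∧ (∀ α1 ∈ Set.Icc (0 : ℝ) 1,
        MonotoneOn (fun α2 => f g11 g12 g21 g22 p1 p2 α1 α2) (Set.Icc 0 1))
    ∧ (∀ α1 ∈ Set.Icc (0 : ℝ) 1, ∀ α2 ∈ Set.Icc (0 : ℝ) 1,
        f g11 g12 g21 g22 p1 p2 α1 α2 ≤ f g11 g12 g21 g22 p1 p2 1 1)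
    ∧ (∀ α1 ∈ Set.Icc (0 : ℝ) 1, ∀ α2 ∈ Set.Icc (0 : ℝ) 1,
        f g11 g12 g21 g22 p1 p2 α1 α2
          = C ((α1 * g11 * p1 + (1 - α2) * g12 * p2) / (1 + α2 * g12 * p2))
            + C ((α2 * g22 * p2 + (1 - α1) * g21 * p1) / (1 + α1 * g21 * p1))) := by
  have hUW2' : (1 + g12 * p2) * (g21 * p1) ≤ g11 * p1 := by
    rw [← mul_assoc]; exact mul_le_mul_of_nonneg_right hUW2 hp1
  have hUW1' : (1 + g21 * p1) * (g12 * p2) ≤ g22 * p2 := by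
    rw [← mul_assoc]; exact mul_le_mul_of_nonneg_right hUW1 hp2
  have mono1 := (rateGain_monotoneOn (by positivity) (by positivity) hUW2').mono
    (Icc_subset_Ici_self : Icc (0 : ℝ) 1 ⊆ _)
  have mono2 := (rateGain_monotoneOn (by positivity) (by positivity) hUW1').mono
    (Icc_subset_Ici_self : Icc (0 : ℝ) 1 ⊆ _)
  have hm1 : ∀ α2 ∈ Icc (0 : ℝ) 1,
      MonotoneOn (fun α1 => f g11 g12 g21 g22 p1 p2 α1 α2) (Icc 0 1) := fun α2 _ => by
    simpa only [f_eq_rateGain_add] using mono1.add_const _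
  have hm2 : ∀ α1 ∈ Icc (0 : ℝ) 1,
      MonotoneOn (fun α2 => f g11 g12 g21 g22 p1 p2 α1 α2) (Icc 0 1) := fun α1 _ => by
    simpa only [f_eq_rateGain_add] using mono2.const_add _
  have one_mem : (1 : ℝ) ∈ Icc (0 : ℝ) 1 := right_mem_Icc.2 zero_le_one
  refine ⟨hm1, hm2, fun α1 h1 α2 h2 => ?_, fun α1 ⟨h1, _⟩ α2 ⟨h2, _⟩ => ?_⟩
  · exact (hm1 α2 h2 h1 one_mem h1.2).trans (hm2 1 one_mem h2 one_mem h2.2)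
  · rw [C_div_eq_logb_sub (by positivity) (n := 1 + α1 * g11 * p1 + g12 * p2) (by positivity)
        (by ring), C_div_eq_logb_sub (by positivity) (n := 1 + α2 * g22 * p2 + g21 * p1)
        (by positivity) (by ring), f]
    ring
end
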